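/- arXiv:1606.01496 — 3 statements merged into one kernel-verified Lean document; each statement's English description precedes it below -/
import Mathlib

section
/- Let G be a locally finite simple graph and x a vertex with d_x ≥ 1. If N < 1 then K_{G,x}(N) < 0; equivalently, x does not satisfy CD(0,N) for any N < 1. -/
open Finset Filter Topology ENNReal SimpleGraph

noncomputable instance (priority := low) finLocFin {V : Type*} [Finite V] (G : SimpleGraph V) :
    G.LocallyFinite := fun _ => Fintype.ofFinite _

/-- Non-normalized graph Laplacian. -/
noncomputable def lap {V : Type*} (G : SimpleGraph V) [G.LocallyFinite] (f : V → ℝ) (x : V) : ℝ :=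
  ∑ y ∈ G.neighborFinset x, (f y - f x)

/-- Bakry–Émery Γ operator. -/
noncomputable def gam {V : Type*} (G : SimpleGraph V) [G.LocallyFinite] (f g : V → ℝ) (x : V) : ℝ :=
  (lap G (fun v => f v * g v) x - f x * lap G g x - g x * lap G f x) / 2

/-- Bakry–Émery Γ₂ operator. -/
noncomputable def gam2 {V : Type*} (G : SimpleGraph V) [G.LocallyFinite] (f g : V → ℝ) (x : V) : ℝ :=
  (lap G (gam G f g) x - gam G f (lap G g) x - gam G (lap G f) g x) / 2

/-- The coefficient 1/N for N ∈ (0,∞], with 1/∞ = 0. -/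
noncomputable def invN (N : ℝ≥0∞) : ℝ := (N⁻¹).toReal

/-- The vertex `x` satisfies the curvature-dimension inequality CD(K,N). -/
def CD {V : Type*} (G : SimpleGraph V) [G.LocallyFinite] (K : ℝ) (N : ℝ≥0∞) (x : V) : Prop :=
  ∀ f : V → ℝ, gam2 G f f x ≥ invN N * (lap G f x) ^ 2 + K * gam G f f x

lemma gam_eq_sum {V : Type*} (G : SimpleGraph V) [G.LocallyFinite] (f : V → ℝ) (x : V) :
    gam G f f x = (∑ y ∈ G.neighborFinset x, (f y - f x) ^ 2) / 2 := by
  simp only [gam, lap, Finset.mul_sum, ← Finset.sum_sub_distrib]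
  congr 1
  apply Finset.sum_congr rfl
  intro y _
  ring

lemma gam_nonneg {V : Type*} (G : SimpleGraph V) [G.LocallyFinite] (f : V → ℝ) (x : V) :
    0 ≤ gam G f f x := by
  rw [gam_eq_sum]
  positivity

lemma gam_comm {V : Type*} (G : SimpleGraph V) [G.LocallyFinite] (f g : V → ℝ) (x : V) :
    gam G f g x = gam G g f x := by
  unfold gam
  simp only [mul_comm]
  ring

lemma lap_const_diff {V : Type*} (G : SimpleGraph V) [G.LocallyFinite] (g : V → ℝ) (x : V)
    (c : ℝ) (h : ∀ y ∈ G.neighborFinset x, g y - g x = c) :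
    lap G g x = (G.degree x : ℝ) * c := by
  unfold lap
  rw [Finset.sum_congr rfl h, Finset.sum_const, nsmul_eq_mul,
    SimpleGraph.card_neighborFinset_eq_degree]

theorem stmt_7 {V : Type*} (G : SimpleGraph V) [G.LocallyFinite] (x : V)
    (hd : 1 ≤ G.degree x) (N : ℝ≥0∞) (hN : 0 < N) (hN1 : N < 1) :
    (∀ k : ℝ, IsGreatest {K : ℝ | CD G K N x} k → k < 0) ∧ ¬ CD G 0 N x := by
  classical
  have hNtop : N ≠ ⊤ := (hN1.trans one_lt_top).ne
  have hNt0 : 0 < N.toReal := ENNReal.toReal_pos hN.ne' hNtop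
  have hNt1 : N.toReal < 1 := by
    have := (ENNReal.toReal_lt_toReal hNtop one_ne_top).mpr hN1
    simpa using this
  have hinv : 1 < invN N := by
    rw [invN, ENNReal.toReal_inv]
    exact (one_lt_inv₀ hNt0).mpr hNt1
  set d : ℝ := (G.degree x : ℝ) with hdR
  have hd1 : (1 : ℝ) ≤ d := by rw [hdR]; exact_mod_cast hd
  set f : V → ℝ := fun v => if v = x then 1 else 0 with hf
  have hfx : f x = 1 := by simp [hf]
  have hfy : ∀ y ∈ G.neighborFinset x, f y = 0 := by
    intro y hy
    have hne : y ≠ x := fun h => (G.notMem_neighborFinset_self x) (h ▸ hy)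
    simp [hf, hne]
  have hff : (fun v => f v * f v) = f := by
    funext v
    by_cases h : v = x <;> simp [hf, h]
  -- lap f x = -d
  have h1 : lap G f x = -d := by
    have := lap_const_diff G f x (-1) (fun y hy => by rw [hfy y hy, hfx]; ring)
    rw [this]; ring
  -- lap f y = 1 for y ~ x
  have h2 : ∀ y ∈ G.neighborFinset x, lap G f y = 1 := by
    intro y hy
    have hxy : x ∈ G.neighborFinset y := by
      rw [SimpleGraph.mem_neighborFinset] at hy ⊢
      exact hy.symm
    unfold lap
    rw [Finset.sum_congr rfl (fun z _ => by rw [hfy y hy, sub_zero])]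
    simp only [hf]
    rw [Finset.sum_ite_eq' (G.neighborFinset y) x (fun _ => (1:ℝ))]
    simp [hxy]
  -- gam f f x = d/2
  have h4 : gam G f f x = d / 2 := by
    unfold gam
    rw [hff, h1, hfx]
    ring
  -- gam f f y = 1/2 for y ~ x
  have h5 : ∀ y ∈ G.neighborFinset x, gam G f f y = 1 / 2 := by
    intro y hy
    unfold gam
    rw [hff, h2 y hy, hfy y hy]
    ring
  -- lap (gam f f) x = d * (1 - d) / 2
  have h6 : lap G (gam G f f) x = d * (1 - d) / 2 := by
    have := lap_const_diff G (gam G f f) x (1/2 - d/2)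
      (fun y hy => by rw [h5 y hy, h4])
    rw [this]; ring
  -- lap (f * lap f) x = d * d
  have h7 : lap G (fun v => f v * lap G f v) x = d * d := by
    have := lap_const_diff G (fun v => f v * lap G f v) x d
      (fun y hy => by
        rw [hfy y hy, hfx, h1, zero_mul, one_mul]
        ring)
    rw [this]
  -- lap (lap f) x = d * (1 + d)
  have h8 : lap G (lap G f) x = d * (1 + d) := by
    have := lap_const_diff G (lap G f) x (1 + d)
      (fun y hy => by rw [h2 y hy, h1]; ring)
    rw [this]
  -- gam f (lap f) x = -(d*d + d)/2
  have h9 : gam G f (lap G f) x = -(d * d + d) / 2 := by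
    unfold gam
    rw [h7, h8, h1, hfx]
    ring
  -- gam2 f f x = d * (d + 3) / 4
  have h10 : gam2 G f f x = d * (d + 3) / 4 := by
    unfold gam2
    rw [gam_comm G (lap G f) f x, h9, h6]
    ring
  have hd0 : (0 : ℝ) < d := lt_of_lt_of_le one_pos hd1
  have hnotCD0 : ¬ CD G 0 N x := by
    intro hCD
    have hineq := hCD f
    rw [h10, h1] at hineq
    -- hineq : d*(d+3)/4 ≥ invN N * d^2 + 0 * gam f f x
    have key1 : d * (d + 3) / 4 ≤ d ^ 2 := by nlinarith [mul_nonneg hd0.le (sub_nonneg.mpr hd1)]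
    have key2 : d ^ 2 < invN N * d ^ 2 := by
      nlinarith [mul_pos (show (0:ℝ) < invN N - 1 by linarith) (pow_pos hd0 2)]
    have : invN N * (-d) ^ 2 = invN N * d ^ 2 := by ring
    rw [this] at hineq
    linarith
  refine ⟨fun k hk => ?_, hnotCD0⟩
  by_contra hk0
  push_neg at hk0
  apply hnotCD0
  intro g
  have hkg := hk.1 g
  have hg := gam_nonneg G g x
  nlinarith [mul_nonneg hk0 hg]
end

section
/- Let x be a leaf (degree-1 vertex) of a locally finite simple graph G, with unique neighbour y. Then for all N ∈ (0,∞], K_{G,x}(N) = 2 - (d_y - 1)/2 - 2/N. -/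
open Finset Filter Topology ENNReal SimpleGraph

lemma gam_eq {V : Type*} (G : SimpleGraph V) [G.LocallyFinite] (f g : V → ℝ) (v : V) :
    gam G f g v = (∑ z ∈ G.neighborFinset v, (f z - f v) * (g z - g v)) / 2 := by
  unfold gam lap
  rw [Finset.mul_sum, Finset.mul_sum, ← Finset.sum_sub_distrib, ← Finset.sum_sub_distrib]
  congr 1
  exact Finset.sum_congr rfl fun z _ => by ring

lemma lap_leaf {V : Type*} (G : SimpleGraph V) [G.LocallyFinite] {x y : V}
    (hN : G.neighborFinset x = {y}) (g : V → ℝ) : lap G g x = g y - g x := by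
  unfold lap; rw [hN, Finset.sum_singleton]

lemma gam2_formula {V : Type*} [DecidableEq V] (G : SimpleGraph V) [G.LocallyFinite] {x y : V}
    (hN : G.neighborFinset x = {y}) (hyx : x ∈ G.neighborFinset y) (f : V → ℝ) :
    gam2 G f f x = (∑ z ∈ (G.neighborFinset y).erase x, (f z - f y) ^ 2) / 4
      + (f y - f x) ^ 2
      - (f y - f x) * (∑ z ∈ (G.neighborFinset y).erase x, (f z - f y)) / 2 := by
  have hLy : lap G f y = (f x - f y) + ∑ z ∈ (G.neighborFinset y).erase x, (f z - f y) := by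
    unfold lap; rw [← Finset.add_sum_erase _ _ hyx]
  have hGy : gam G f f y = ((f x - f y) * (f x - f y)
      + ∑ z ∈ (G.neighborFinset y).erase x, (f z - f y) * (f z - f y)) / 2 := by
    rw [gam_eq, ← Finset.add_sum_erase _ _ hyx]
  have hsq : ∑ z ∈ (G.neighborFinset y).erase x, (f z - f y) * (f z - f y)
      = ∑ z ∈ (G.neighborFinset y).erase x, (f z - f y) ^ 2 := by
    exact Finset.sum_congr rfl fun z _ => (sq (f z - f y)).symm ▸ by ring
  unfold gam2
  rw [lap_leaf G hN (gam G f f), hGy, gam_eq G f f x, gam_eq G f (lap G f) x,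
    gam_eq G (lap G f) f x, hN]
  simp only [Finset.sum_singleton]
  rw [lap_leaf G hN f, hLy, hsq]
  ring

theorem stmt_13 {V : Type*} (G : SimpleGraph V) [G.LocallyFinite] (x y : V)
    (hleaf : G.degree x = 1) (hxy : G.Adj x y) :
    ∀ N : ℝ≥0∞, 0 < N →
      IsGreatest {K : ℝ | CD G K N x} (2 - ((G.degree y : ℝ) - 1) / 2 - 2 * invN N) := by
  classical
  intro N _hN0
  have hy : y ∈ G.neighborFinset x := by rw [SimpleGraph.mem_neighborFinset]; exact hxy
  have hNx : G.neighborFinset x = {y} := by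
    obtain ⟨a, ha⟩ := Finset.card_eq_one.mp hleaf
    rw [ha] at hy ⊢
    rw [Finset.mem_singleton] at hy
    rw [hy]
  have hyx : x ∈ G.neighborFinset y := by rw [SimpleGraph.mem_neighborFinset]; exact hxy.symm
  have hd1 : 1 ≤ G.degree y := by
    have := Finset.card_pos.mpr ⟨x, hyx⟩
    exact this
  have hdR : (((G.neighborFinset y).erase x).card : ℝ) = (G.degree y : ℝ) - 1 := by
    rw [Finset.card_erase_of_mem hyx]
    have : (G.neighborFinset y).card = G.degree y := rfl
    rw [this]
    push_cast [hd1]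
    ring
  constructor
  · intro f
    set s := (G.neighborFinset y).erase x with hs
    set u := f y - f x with hu
    set S := ∑ z ∈ s, (f z - f y) with hS
    set Q := ∑ z ∈ s, (f z - f y) ^ 2 with hQ
    have h2 : gam2 G f f x = Q / 4 + u ^ 2 - u * S / 2 := gam2_formula G hNx hyx f
    have hlx : lap G f x = u := lap_leaf G hNx f
    have hg : gam G f f x = u * u / 2 := by
      rw [gam_eq, hNx, Finset.sum_singleton]
    have hexp : ∑ z ∈ s, ((f z - f y) - u) ^ 2 = Q - 2 * u * S + (s.card : ℝ) * u ^ 2 := by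
      have e1 : ∀ z ∈ s, ((f z - f y) - u) ^ 2
          = (f z - f y) ^ 2 - 2 * u * (f z - f y) + u ^ 2 := fun z _ => by ring
      rw [Finset.sum_congr rfl e1, Finset.sum_add_distrib, Finset.sum_sub_distrib,
        ← Finset.mul_sum, Finset.sum_const, nsmul_eq_mul, ← hS, ← hQ]
    have hkey : (0 : ℝ) ≤ Q - 2 * u * S + (s.card : ℝ) * u ^ 2 := by
      rw [← hexp]
      exact Finset.sum_nonneg fun z _ => sq_nonneg _
    rw [ge_iff_le, h2, hlx, hg]
    have hr : invN N * u ^ 2 + (2 - ((G.degree y : ℝ) - 1) / 2 - 2 * invN N) * (u * u / 2)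
        = u ^ 2 - (s.card : ℝ) * u ^ 2 / 4 := by rw [← hdR]; ring
    rw [hr]
    have main : ∀ Q' S' c' u' : ℝ, (0:ℝ) ≤ Q' - 2 * u' * S' + c' * u' ^ 2 →
        u' ^ 2 - c' * u' ^ 2 / 4 ≤ Q' / 4 + u' ^ 2 - u' * S' / 2 :=
      fun Q' S' c' u' h => by linarith
    exact main Q S (s.card : ℝ) u hkey
  · intro K hK
    classical
    set f : V → ℝ := fun v => if v = x then 0 else if v = y then 1 else 2 with hf
    have hxney : x ≠ y := G.ne_of_adj hxy
    have hfx : f x = 0 := by simp [hf]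
    have hfy : f y = 1 := by simp [hf, hxney.symm]
    have hfz : ∀ z ∈ (G.neighborFinset y).erase x, f z - f y = 1 := by
      intro z hz
      have hzx : z ≠ x := Finset.ne_of_mem_erase hz
      have hzy : z ≠ y := by
        have := SimpleGraph.mem_neighborFinset G y z |>.mp (Finset.mem_of_mem_erase hz)
        exact this.ne'
      simp [hf, hzx, hzy, hxney.symm]
      norm_num
    set c : ℝ := (((G.neighborFinset y).erase x).card : ℝ) with hc
    have hSc : ∑ z ∈ (G.neighborFinset y).erase x, (f z - f y) = c := by
      rw [Finset.sum_congr rfl hfz, Finset.sum_const, nsmul_eq_mul, mul_one]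
    have hQc : ∑ z ∈ (G.neighborFinset y).erase x, (f z - f y) ^ 2 = c := by
      have : ∀ z ∈ (G.neighborFinset y).erase x, (f z - f y) ^ 2 = 1 := fun z hz => by
        rw [hfz z hz]; ring
      rw [Finset.sum_congr rfl this, Finset.sum_const, nsmul_eq_mul, mul_one]
    have h2 : gam2 G f f x = c / 4 + 1 - c / 2 := by
      rw [gam2_formula G hNx hyx f, hSc, hQc, hfx, hfy]
      ring
    have hlx : lap G f x = 1 := by rw [lap_leaf G hNx f, hfx, hfy]; ring
    have hg : gam G f f x = 1 / 2 := by
      rw [gam_eq, hNx, Finset.sum_singleton, hfx, hfy]; ring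
    have := hK f
    rw [h2, hlx, hg] at this
    rw [← hdR]
    rw [← hc] at *
    nlinarith [this]
end

section
/- Let G₁=(V₁,E₁), G₂=(V₂,E₂) be locally finite simple graphs and (x,y) ∈ V₁×V₂. For any function F:V₁×V₂→ℝ, writing F_y(·)=F(·,y) and F^x(·)=F(x,·), the Γ₂ operator on the Cartesian product G₁×G₂ satisfies Γ₂(F)(x,y) = Γ₂(F_y)(x) + Γ₂(F^x)(y) + (1/2) Σ_{x_i~x} Σ_{y_k~y} (F(x_i,y_k) - F(x,y_k) - F(x_i,y) + F(x,y))². -/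
open Finset Filter Topology ENNReal SimpleGraph

/-! On `G □ H` the neighbourhood of `(x, y)` is the disjoint union of the neighbourhoods of `x`
and `y` in the two fibres, so `Δ` and `Γ` split into the corresponding operators of the factors.
Expanding `Γ₂ F = (ΔΓ(F) − 2Γ(F, ΔF)) / 2` with this leaves the `Γ₂` of the two fibre restrictions
plus one mixed term per factor; summand by summand, the two mixed terms add up to the square of the
mixed second difference `F(xᵢ, y_k) − F(x, y_k) − F(xᵢ, y) + F(x, y)`. -/

namespace SimpleGraph

section Operators

variable {V : Type*} (G : SimpleGraph V) [G.LocallyFinite]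

lemma lap_add (f g : V → ℝ) (x : V) :
    lap G (fun v => f v + g v) x = lap G f x + lap G g x := by
  rw [lap, lap, lap, ← sum_add_distrib]
  exact sum_congr rfl fun _ _ => by ring

lemma gam_eq_sum (f g : V → ℝ) (x : V) :
    gam G f g x = (∑ z ∈ G.neighborFinset x, (f z - f x) * (g z - g x)) / 2 := by
  rw [gam, lap, lap, lap, mul_sum, mul_sum, ← sum_sub_distrib, ← sum_sub_distrib]
  exact congrArg (· / 2) (sum_congr rfl fun _ _ => by ring)

lemma gam_comm (f g : V → ℝ) (x : V) : gam G f g x = gam G g f x := by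
  rw [gam_eq_sum, gam_eq_sum]
  exact congrArg (· / 2) (sum_congr rfl fun _ _ => by ring)

lemma gam_add_right (f g h : V → ℝ) (x : V) :
    gam G f (fun v => g v + h v) x = gam G f g x + gam G f h x := by
  rw [gam_eq_sum, gam_eq_sum, gam_eq_sum, ← add_div, ← sum_add_distrib]
  exact congrArg (· / 2) (sum_congr rfl fun _ _ => by ring)

lemma gam2_self (f : V → ℝ) (x : V) :
    gam2 G f f x = (lap G (gam G f f) x - 2 * gam G f (lap G f) x) / 2 := by
  rw [gam2, gam_comm G (lap G f)]
  ring

end Operators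

section BoxProd

variable {V₁ V₂ : Type*} (G : SimpleGraph V₁) (H : SimpleGraph V₂)
  [G.LocallyFinite] [H.LocallyFinite]

lemma lap_boxProd [(G □ H).LocallyFinite] (F : V₁ × V₂ → ℝ) (x : V₁) (y : V₂) :
    lap (G □ H) F (x, y) = lap G (fun u => F (u, y)) x + lap H (fun v => F (x, v)) y := by
  rw [lap, neighborFinset_boxProd, sum_disjUnion, sum_product, sum_product]
  simp [lap]

lemma gam_boxProd [(G □ H).LocallyFinite] (F F' : V₁ × V₂ → ℝ) (x : V₁) (y : V₂) :
    gam (G □ H) F F' (x, y) =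
      gam G (fun u => F (u, y)) (fun u => F' (u, y)) x +
      gam H (fun v => F (x, v)) (fun v => F' (x, v)) y := by
  rw [gam, gam, gam, lap_boxProd, lap_boxProd, lap_boxProd]
  ring

/-- The second summand on the right cancels against the same expression with the roles of `G` and
`H` exchanged. -/
lemma lap_gam_sub_two_gam_lap_mixed (Φ : V₁ → V₂ → ℝ) (x : V₁) (y : V₂) :
    lap G (fun u => gam H (Φ u) (Φ u) y) x -
        2 * gam G (fun u => Φ u y) (fun u => lap H (Φ u) y) x =
      ∑ i ∈ G.neighborFinset x, ∑ k ∈ H.neighborFinset y,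
        ((Φ i k - Φ x k - Φ i y + Φ x y) ^ 2 / 2 +
          (Φ i k - Φ x k - Φ i y + Φ x y) * (Φ x k - Φ i y)) := by
  simp only [gam_eq_sum, lap]
  rw [mul_div_cancel₀ _ two_ne_zero, ← sum_sub_distrib]
  refine sum_congr rfl fun i _ => ?_
  rw [← sub_div, ← sum_sub_distrib, ← sum_sub_distrib, mul_sum, sum_div, ← sum_sub_distrib]
  exact sum_congr rfl fun _ _ => by ring

end BoxProd

end SimpleGraph

open SimpleGraph in
theorem stmt_16 {V₁ V₂ : Type*} (G : SimpleGraph V₁) (H : SimpleGraph V₂)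
    [G.LocallyFinite] [H.LocallyFinite] [(G.boxProd H).LocallyFinite]
    (F : V₁ × V₂ → ℝ) (x : V₁) (y : V₂) :
    gam2 (G.boxProd H) F F (x, y) =
      gam2 G (fun u => F (u, y)) (fun u => F (u, y)) x +
      gam2 H (fun v => F (x, v)) (fun v => F (x, v)) y +
      (1 / 2) * ∑ xi ∈ G.neighborFinset x, ∑ yk ∈ H.neighborFinset y,
        (F (xi, yk) - F (x, yk) - F (xi, y) + F (x, y)) ^ 2 := by
  have mixed_G := lap_gam_sub_two_gam_lap_mixed G H (fun u v => F (u, v)) x y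
  have mixed_H := lap_gam_sub_two_gam_lap_mixed H G (fun v u => F (u, v)) y x
  have mixed_sum : ∑ xi ∈ G.neighborFinset x, ∑ yk ∈ H.neighborFinset y,
      (F (xi, yk) - F (x, yk) - F (xi, y) + F (x, y)) ^ 2 =
        (∑ i ∈ G.neighborFinset x, ∑ k ∈ H.neighborFinset y,
          ((F (i, k) - F (x, k) - F (i, y) + F (x, y)) ^ 2 / 2 +
            (F (i, k) - F (x, k) - F (i, y) + F (x, y)) * (F (x, k) - F (i, y)))) +
        ∑ k ∈ H.neighborFinset y, ∑ i ∈ G.neighborFinset x,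
          ((F (i, k) - F (i, y) - F (x, k) + F (x, y)) ^ 2 / 2 +
            (F (i, k) - F (i, y) - F (x, k) + F (x, y)) * (F (i, y) - F (x, k))) := by
    rw [sum_comm (s := H.neighborFinset y), ← sum_add_distrib]
    refine sum_congr rfl fun i _ => ?_
    rw [← sum_add_distrib]
    exact sum_congr rfl fun k _ => by ring
  simp only [gam2_self, gam_boxProd, lap_boxProd, lap_add, gam_add_right]
  linarith
end
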